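/- arXiv:1202.2300 — 2 statements merged into one kernel-verified Lean document; each statement's English description precedes it below -/
import Mathlib

section
/- Let Γ be a connected k-regular graph with d+1 distinct eigenvalues k = λ_0 > ⋯ > λ_d and odd-girth at least 2d+1, and let ã_d = Σ_{i=0}^d λ_i. If u and v are vertices at distance d, then (A^{d+1})_{uv} = ã_d · π_0/n. -/
/-!
Let `p = ∏ᵢ (X - λᵢ)` and `q = ∏_{i>0} (X - λᵢ)`, so that `p = q · (X - k)`, and `p(A) = 0`
since `A` is symmetric. Then `q(A) A = k q(A)`, so every row of `q(A)` is a `k`-eigenvector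
of the connected `k`-regular graph, hence constant; its row sum is `q(k) = π₀`, so every
entry of `q(A)` is `π₀ / n`. On the other hand, since `A^m` has a zero `(u, v)`-entry for
`m < d`, the `(u, v)`-entries of `q(A)` and `p(A)` are `(A^d)_{uv}` and
`-ã_d (A^d)_{uv} + (A^{d+1})_{uv}`.
-/

open SimpleGraph Matrix Finset Polynomial

namespace Matrix

variable {n : Type*} [Fintype n] [DecidableEq n]

theorem aeval_mulVec_of_mulVec_eq_smul {R : Type*} [CommRing R] {A : Matrix n n R}
    {x : n → R} {μ : R} (hx : A *ᵥ x = μ • x) (p : R[X]) :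
    aeval A p *ᵥ x = p.eval μ • x := by
  have h := Module.End.aeval_apply_of_mem_apply_eq_smul (f := toLinAlgEquiv' A) (p := p)
    (by rw [toLinAlgEquiv'_apply, hx])
  rwa [aeval_algEquiv, AlgHom.comp_apply, AlgEquiv.coe_toAlgHom, toLinAlgEquiv'_apply] at h

theorem IsHermitian.aeval_eq_zero_of_isRoot {𝕜 : Type*} [RCLike 𝕜] {A : Matrix n n 𝕜}
    (hA : A.IsHermitian)
    {p : ℝ[X]} (hp : ∀ μ ∈ spectrum ℝ A, p.IsRoot μ) : aeval A p = 0 := by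
  rw [← cfc_polynomial p A hA.isSelfAdjoint, cfc_congr (g := 0) hp, cfc_zero]

theorem aeval_apply_of_pow_apply_eq_zero {R : Type*} [CommSemiring R] {A : Matrix n n R}
    {i j : n} {d : ℕ} (hA : ∀ m < d, (A ^ m) i j = 0) {p : R[X]} (hp : p.natDegree ≤ d + 1) :
    aeval A p i j = p.coeff d * (A ^ d) i j + p.coeff (d + 1) * (A ^ (d + 1)) i j := by
  rw [aeval_eq_sum_range' (Nat.lt_succ_of_le hp), sum_apply, sum_range_succ, sum_range_succ,
    sum_eq_zero fun m hm => by rw [smul_apply, hA m (mem_range.mp hm), smul_zero]]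
  simp only [smul_apply, smul_eq_mul, zero_add]

end Matrix

namespace SimpleGraph

variable {V : Type*} [Fintype V] [DecidableEq V] {G : SimpleGraph V} [DecidableRel G.Adj]

theorem adjMatrix_pow_apply_eq_zero_of_lt_dist {R : Type*} [Semiring R] {u v : V} {m : ℕ}
    (hm : m < G.dist u v) : (G.adjMatrix R ^ m) u v = 0 := by
  have : IsEmpty {w : G.Walk u v | w.length = m} :=
    ⟨fun ⟨w, hw⟩ => hm.not_ge (hw ▸ dist_le w)⟩
  rw [adjMatrix_pow_apply_eq_card_walk, Fintype.card_eq_zero, Nat.cast_zero]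

theorem adjMatrix_pow_succ_apply_of_aeval_eq_zero {R : Type*} [CommRing R] {u v : V} {d : ℕ}
    (huv : G.dist u v = d) {p : R[X]} (hp : p.Monic) (hdeg : p.natDegree = d + 1)
    (h : aeval (G.adjMatrix R) p = 0) :
    (G.adjMatrix R ^ (d + 1)) u v = -p.coeff d * (G.adjMatrix R ^ d) u v := by
  have h_uv := congrFun₂ h u v
  rw [Matrix.aeval_apply_of_pow_apply_eq_zero
      (fun m hm => adjMatrix_pow_apply_eq_zero_of_lt_dist (huv ▸ hm)) hdeg.le,
    ← hdeg, hp.coeff_natDegree, hdeg, one_mul, Matrix.zero_apply] at h_uv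
  rw [neg_mul, eq_neg_iff_add_eq_zero, add_comm, h_uv]

variable {k : ℕ}

theorem Connected.apply_eq_of_mul_adjMatrix_eq_smul (hconn : G.Connected)
    (hreg : G.IsRegularOfDegree k) {M : Matrix V V ℝ} (hM : M * G.adjMatrix ℝ = (k : ℝ) • M)
    (u w w' : V) : M u w = M u w' := by
  have hrow : G.lapMatrix ℝ *ᵥ M u = 0 := by
    ext x
    have hx := congrFun₂ hM u x
    rw [mul_adjMatrix_apply, Matrix.smul_apply, smul_eq_mul] at hx
    rw [lapMatrix_mulVec_apply, hreg x, hx, Pi.zero_apply, sub_self]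
  exact (lapMatrix_mulVec_eq_zero_iff_forall_reachable G).mp hrow w w' (hconn w w')

theorem Connected.card_mul_aeval_adjMatrix_apply (hconn : G.Connected)
    (hreg : G.IsRegularOfDegree k) {q : ℝ[X]}
    (hq : aeval (G.adjMatrix ℝ) (q * (X - C (k : ℝ))) = 0) (u v : V) :
    Fintype.card V * aeval (G.adjMatrix ℝ) q u v = q.eval (k : ℝ) := by
  set M := aeval (G.adjMatrix ℝ) q
  have hM : M * G.adjMatrix ℝ = (k : ℝ) • M := by
    rw [_root_.map_mul, map_sub, aeval_X, aeval_C, mul_sub, sub_eq_zero,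
      Algebra.algebraMap_eq_smul_one, mul_smul_one] at hq
    exact hq
  have hones : G.adjMatrix ℝ *ᵥ (fun _ => 1) = (k : ℝ) • fun _ => 1 := by
    ext x
    simpa using adjMatrix_mulVec_const_apply_of_regular hreg (a := (1 : ℝ))
  have hsum := congrFun (Matrix.aeval_mulVec_of_mulVec_eq_smul hones q) u
  simp only [mulVec, dotProduct, mul_one, Pi.smul_apply, smul_eq_mul] at hsum
  rw [← hsum, sum_congr rfl fun w _ => hconn.apply_eq_of_mul_adjMatrix_eq_smul hreg hM u w v,
    sum_const, card_univ, nsmul_eq_mul]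

theorem Connected.card_mul_adjMatrix_pow_apply_of_aeval_eq_zero (hconn : G.Connected)
    (hreg : G.IsRegularOfDegree k) {u v : V} {d : ℕ} (huv : G.dist u v = d) {q : ℝ[X]}
    (hq : q.Monic) (hdeg : q.natDegree = d)
    (h : aeval (G.adjMatrix ℝ) (q * (X - C (k : ℝ))) = 0) :
    Fintype.card V * (G.adjMatrix ℝ ^ d) u v = q.eval (k : ℝ) := by
  rw [← hconn.card_mul_aeval_adjMatrix_apply hreg h u v, Matrix.aeval_apply_of_pow_apply_eq_zero
      (fun m hm => adjMatrix_pow_apply_eq_zero_of_lt_dist (huv ▸ hm)) (by omega),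
    ← hdeg, hq.coeff_natDegree, coeff_eq_zero_of_natDegree_lt (by omega), one_mul, zero_mul,
    add_zero]

end SimpleGraph

theorem stmt_6_general {V : Type*} [Fintype V] [DecidableEq V] (G : SimpleGraph V)
    [DecidableRel G.Adj] (k d : ℕ) (lam : Fin (d + 1) → ℝ)
    (hconn : G.Connected) (hreg : G.IsRegularOfDegree k)
    (h0 : lam 0 = (k : ℝ))
    (hspec : spectrum ℝ (G.adjMatrix ℝ) = Set.range lam)
    (u v : V) (huv : G.dist u v = d) :
    ((G.adjMatrix ℝ) ^ (d + 1)) u v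
      = (∑ i : Fin (d + 1), lam i) *
          (∏ i ∈ Finset.Ioi (0 : Fin (d + 1)), ((k : ℝ) - lam i)) / (Fintype.card V : ℝ) := by
  set q : ℝ[X] := ∏ i ∈ Ioi 0, (X - C (lam i))
  have hIoi : Ioi (0 : Fin (d + 1)) = univ.erase 0 := by ext; simp
  have hpq : ∏ i, (X - C (lam i)) = q * (X - C (k : ℝ)) := by
    rw [← h0, ← prod_erase_mul _ _ (mem_univ 0), ← hIoi]
  have hp : aeval (G.adjMatrix ℝ) (∏ i, (X - C (lam i))) = 0 :=
    (G.isHermitian_adjMatrix ℝ).aeval_eq_zero_of_isRoot fun μ hμ => by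
      obtain ⟨i, rfl⟩ := hspec ▸ hμ
      simp [eval_prod, prod_eq_zero (mem_univ i)]
  have hpow := hconn.card_mul_adjMatrix_pow_apply_of_aeval_eq_zero hreg huv
    (monic_prod_X_sub_C lam _) (by simp [hIoi]) (hpq ▸ hp)
  have hpow_succ := adjMatrix_pow_succ_apply_of_aeval_eq_zero huv
    (monic_prod_X_sub_C lam _) (by simp) hp
  have hcoeff : (∏ i, (X - C (lam i))).coeff d = -∑ i, lam i := by
    simpa using prod_X_sub_C_coeff_card_pred univ lam (by simp)
  have : Nonempty V := hconn.nonempty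
  rw [hpow_succ, hcoeff, neg_neg, eq_div_iff (by positivity), mul_assoc,
    mul_comm _ (Fintype.card V : ℝ), hpow]
  simp [eval_prod]

/-- In a connected `k`-regular graph with `d+1` distinct eigenvalues
`k = λ₀ > ⋯ > λ_d` and odd-girth at least `2d+1`, if `u` and `v` are at distance `d`
then `(A^{d+1})_{uv} = ã_d · π₀ / n`, where `ã_d = Σ_{i=0}^d λᵢ` and
`π₀ = ∏_{i=1}^d (k - λᵢ)`. -/
theorem stmt_6 {V : Type*} [Fintype V] [DecidableEq V] (G : SimpleGraph V)
    [DecidableRel G.Adj] (k d : ℕ) (lam : Fin (d + 1) → ℝ)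
    (hconn : G.Connected) (hreg : G.IsRegularOfDegree k)
    (hanti : StrictAnti lam) (h0 : lam 0 = (k : ℝ))
    (hspec : spectrum ℝ (G.adjMatrix ℝ) = Set.range lam)
    (hog : ∀ (u : V) (w : G.Walk u u), w.IsCycle → Odd w.length → 2 * d + 1 ≤ w.length)
    (u v : V) (huv : G.dist u v = d) :
    ((G.adjMatrix ℝ) ^ (d + 1)) u v
      = (∑ i : Fin (d + 1), lam i) *
          (∏ i ∈ Finset.Ioi (0 : Fin (d + 1)), ((k : ℝ) - lam i)) / (Fintype.card V : ℝ) :=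
  stmt_6_general G k d lam hconn hreg h0 hspec u v huv
end

section
/- Let Γ be a connected regular graph with d+1 distinct eigenvalues whose predistance polynomials p_0, …, p_d satisfy the three-term recurrence x p_i = β_{i−1} p_{i−1} + α_i p_i + γ_{i+1} p_{i+1}. If Γ has odd-girth at least 2d+1, then α_i = 0 for all i < d, and each p_i is an even polynomial when i is even and an odd polynomial when i is odd. -/
open SimpleGraph Matrix Polynomial Finset

/-!
Let `L q = tr (q(A))`. A closed walk of odd length contains an odd cycle no longer than itself,
so the odd-girth bound makes `L` vanish on odd polynomials of degree `< 2d`. By induction on `i`,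
if `pᵢ` has the parity of `i`, then `x pᵢ²` is odd of degree `2i + 1 < 2d`; applying `L` to the
recurrence multiplied by `pᵢ` and using orthogonality leaves `αᵢ L(pᵢ²) = 0`, so `αᵢ = 0`.
The recurrence then reads `γᵢ₊₁ pᵢ₊₁ = x pᵢ - βᵢ₋₁ pᵢ₋₁` with `γᵢ₊₁ ≠ 0` by comparing degrees,
so `pᵢ₊₁` has the parity of `i + 1`.
-/

namespace SimpleGraph.Walk

variable {V : Type*} {G : SimpleGraph V}

theorem exists_eq_append_of_not_isPath [DecidableEq V] {u v : V} (p : G.Walk u v)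
    (hp : ¬p.IsPath) :
    ∃ (x : V) (a : G.Walk u x) (c : G.Walk x x) (b : G.Walk x v),
      ¬c.Nil ∧ p = a.append (c.append b) := by
  induction p with
  | nil => exact absurd IsPath.nil hp
  | @cons u w v h q ih =>
    by_cases hq : q.IsPath
    · have hu : u ∈ q.support := by
        by_contra hu
        exact hp (hq.cons hu)
      refine ⟨u, nil, cons h (q.takeUntil u hu), q.dropUntil u hu, not_nil_cons, ?_⟩
      simp [q.take_spec hu]
    · obtain ⟨x, a, c, b, hc, rfl⟩ := ih hq
      exact ⟨x, cons h a, c, b, hc, rfl⟩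

theorem exists_isCycle_odd_length_le [DecidableEq V] {u : V} (w : G.Walk u u)
    (hw : Odd w.length) :
    ∃ (x : V) (c : G.Walk x x), c.IsCycle ∧ Odd c.length ∧ c.length ≤ w.length := by
  induction hn : w.length using Nat.strong_induction_on generalizing u with
  | _ n ih =>
  cases w with
  | nil => simp at hw
  | @cons _ v _ h q =>
    by_cases hq : q.IsPath
    · refine ⟨u, cons h q, isCycle_iff_isPath_tail_and_le_length.2 ⟨by simpa using hq, ?_⟩,
        hw, hn.le⟩
      have : q.length ≠ 0 := fun h0 => h.ne (eq_of_length_eq_zero h0).symm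
      rw [length_cons] at hw ⊢
      rcases hw with ⟨k, hk⟩
      omega
    · obtain ⟨x, a, c, b, hcnil, rfl⟩ := q.exists_eq_append_of_not_isPath hq
      have hc : 0 < c.length := not_nil_iff_lt_length.1 hcnil
      have hlen : (cons h (a.append b)).length + c.length = n := by
        simp only [length_cons, length_append] at hn ⊢
        omega
      have hpos : 0 < (cons h (a.append b)).length := by simp
      rcases Nat.even_or_odd c.length with hce | hco
      · have hodd : Odd (cons h (a.append b)).length := by
          rw [hn, ← hlen] at hw
          exact (Nat.odd_add.1 hw).2 hce
        obtain ⟨y, c', hc', ho', hle⟩ := ih _ (by omega) (cons h (a.append b)) hodd rfl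
        exact ⟨y, c', hc', ho', by omega⟩
      · obtain ⟨y, c', hc', ho', hle⟩ := ih _ (by omega) c hco rfl
        exact ⟨y, c', hc', ho', by omega⟩

end SimpleGraph.Walk

namespace Polynomial

def CoeffParity {R : Type*} [Semiring R] (i : ℕ) (f : R[X]) : Prop :=
  ∀ j, Odd (i + j) → f.coeff j = 0

section Semiring

variable {R : Type*} [Semiring R] {i i' : ℕ} {f g : R[X]}

theorem coeffParity_one : CoeffParity 0 (1 : R[X]) := fun j hj => by
  rw [coeff_one, if_neg]
  rintro rfl
  simp at hj

theorem coeffParity_X : CoeffParity 1 (X : R[X]) := fun j hj => by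
  rw [coeff_X, if_neg]
  rintro rfl
  norm_num at hj

theorem CoeffParity.of_even_add (hf : CoeffParity i f) (h : Even (i + i')) :
    CoeffParity i' f := fun j hj =>
  hf j (by rw [Nat.odd_iff] at hj ⊢; rw [Nat.even_iff] at h; omega)

theorem CoeffParity.mul (hf : CoeffParity i f) (hg : CoeffParity i' g) :
    CoeffParity (i + i') (f * g) := fun j hj => by
  rw [coeff_mul]
  refine Finset.sum_eq_zero fun x hx => ?_
  rw [HasAntidiagonal.mem_antidiagonal] at hx
  by_cases h : Odd (i + x.1)
  · rw [hf x.1 h, zero_mul]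
  · rw [hg x.2 ?_, mul_zero]
    rw [Nat.odd_iff] at *
    omega

end Semiring

variable {K : Type*} [CommRing K] [IsDomain K] {n : ℕ} {f g h : K[X]} {a b c : K}

theorem ne_zero_of_X_mul_eq (hrec : X * g = C b * f + C c * h) (hg : g ≠ 0)
    (hf : f.natDegree ≤ g.natDegree) : c ≠ 0 := by
  rintro rfl
  rw [C_0, zero_mul, add_zero] at hrec
  have := congrArg natDegree hrec
  rw [natDegree_X_mul hg] at this
  have := natDegree_C_mul_le b f
  omega

theorem CoeffParity.of_X_mul_eq (hrec : X * g = C b * f + C c * h) (hc : c ≠ 0)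
    (hf : CoeffParity (n + 1) f) (hg : CoeffParity n g) : CoeffParity (n + 1) h := fun j hj => by
  have hXg := (coeffParity_X.mul hg) j (by rwa [add_comm 1])
  rw [hrec, coeff_add, coeff_C_mul, coeff_C_mul, hf j hj, mul_zero, zero_add] at hXg
  exact (mul_eq_zero.1 hXg).resolve_left hc

theorem eq_zero_of_X_mul_eq (L : K[X] →ₗ[K] K) (hrec : X * g = C b * f + C a * g + C c * h)
    (hfg : L (f * g) = 0) (hhg : L (h * g) = 0) (hgg : L (g * g) ≠ 0)
    (hXgg : L (X * g * g) = 0) : a = 0 := by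
  have : a * L (g * g) = 0 := by
    rw [← hXgg, hrec]
    simp only [add_mul, C_mul', smul_mul_assoc, map_add, map_smul, hfg, hhg, smul_eq_mul,
      mul_zero, zero_add, add_zero]
  exact (mul_eq_zero.1 this).resolve_right hgg

variable {d : ℕ} {p : ℕ → K[X]} {α β γ : ℕ → K}

theorem eq_zero_and_coeffParity_of_odd_vanishing (L : K[X] →ₗ[K] K)
    (hL : ∀ q, CoeffParity 1 q → q.natDegree < 2 * d → L q = 0)
    (hdeg : ∀ i ≤ d, (p i).natDegree = i) (hp0 : p 0 = 1) (hp1 : p 1 = X)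
    (horth : ∀ i ≤ d, ∀ j ≤ d, i ≠ j → L (p i * p j) = 0)
    (hsq : ∀ i ≤ d, L (p i * p i) ≠ 0)
    (hrec0 : 0 < d → X * p 0 = C (α 0) * p 0 + C (γ 1) * p 1)
    (hrec : ∀ i, 1 ≤ i → i < d →
      X * p i = C (β (i - 1)) * p (i - 1) + C (α i) * p i + C (γ (i + 1)) * p (i + 1)) :
    (∀ i < d, α i = 0) ∧ ∀ i ≤ d, CoeffParity i (p i) := by
  have hα : ∀ i, 1 ≤ i → i < d → CoeffParity i (p i) → α i = 0 := fun i hi hid hpi =>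
    eq_zero_of_X_mul_eq L (hrec i hi hid) (horth _ (by omega) _ hid.le (by omega))
      (horth _ hid _ hid.le (by omega)) (hsq i hid.le)
      (hL _ ((coeffParity_X.mul hpi).mul hpi |>.of_even_add ⟨i + 1, by omega⟩)
        ((natDegree_mul_le_of_le (natDegree_mul_le_of_le natDegree_X_le (hdeg i hid.le).le)
          (hdeg i hid.le).le).trans_lt (by omega)))
  have hpar : ∀ i ≤ d, CoeffParity i (p i) := by
    intro i
    induction i using Nat.strong_induction_on with
    | _ i ih =>
    match i with
    | 0 => exact fun _ => hp0 ▸ coeffParity_one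
    | 1 => exact fun _ => hp1 ▸ coeffParity_X
    | m + 2 =>
      intro hm
      have hm1 := ih (m + 1) (by omega) (by omega)
      have hrec' := hrec (m + 1) (by omega) (by omega)
      rw [hα (m + 1) (by omega) (by omega) hm1, C_0, zero_mul, add_zero,
        Nat.add_sub_cancel] at hrec'
      have hg : p (m + 1) ≠ 0 :=
        ne_zero_of_natDegree_gt (n := 0) (by rw [hdeg _ (by omega)]; omega)
      refine CoeffParity.of_X_mul_eq hrec' (ne_zero_of_X_mul_eq hrec' hg ?_)
        ((ih m (by omega) (by omega)).of_even_add ⟨m + 1, by omega⟩) hm1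
      rw [hdeg _ (by omega), hdeg _ (by omega)]
      omega
  refine ⟨fun i hi => ?_, hpar⟩
  rcases Nat.eq_zero_or_pos i with rfl | hi0
  · simpa [hp0, hp1, eq_comm] using congrArg (coeff · 0) (hrec0 hi)
  · exact hα i hi0 hi (hpar i hi.le)

end Polynomial

namespace SimpleGraph

variable {V : Type*} [Fintype V] [DecidableEq V] (G : SimpleGraph V) [DecidableRel G.Adj]

theorem adjMatrix_pow_apply_self_eq_zero (R : Type*) [Semiring R] {m : ℕ} (hm : Odd m)
    (hcyc : ∀ (u : V) (c : G.Walk u u), c.IsCycle → Odd c.length → m < c.length) (u : V) :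
    (G.adjMatrix R ^ m) u u = 0 := by
  have : IsEmpty {w : G.Walk u u | w.length = m} := ⟨fun ⟨w, hw⟩ => by
    obtain ⟨x, c, hc, hco, hle⟩ := w.exists_isCycle_odd_length_le (hw ▸ hm)
    exact absurd (hcyc x c hc hco) (by simp only [Set.mem_ofPred_eq] at hw; omega)⟩
  rw [adjMatrix_pow_apply_eq_card_walk, Fintype.card_eq_zero, Nat.cast_zero]

theorem trace_aeval_adjMatrix_eq_zero {R : Type*} [CommRing R] {q : R[X]}
    (hq : CoeffParity 1 q)
    (hcyc : ∀ (u : V) (c : G.Walk u u), c.IsCycle → Odd c.length → q.natDegree < c.length) :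
    trace (aeval (G.adjMatrix R) q) = 0 := by
  rw [aeval_eq_sum_range, trace_sum]
  refine sum_eq_zero fun j hj => ?_
  rw [trace_smul]
  by_cases hj' : Odd j
  · have htr : trace (G.adjMatrix R ^ j) = 0 := sum_eq_zero fun u _ =>
      G.adjMatrix_pow_apply_self_eq_zero R hj'
        (fun u c hc hco => (Nat.lt_succ_iff.1 (mem_range.1 hj)).trans_lt (hcyc u c hc hco)) u
    rw [htr, smul_zero]
  · rw [hq j (by rw [Nat.odd_iff] at hj' ⊢; omega), zero_smul]

end SimpleGraph

theorem stmt_9_general {V : Type*} [Fintype V] [DecidableEq V] (G : SimpleGraph V)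
    [DecidableRel G.Adj] (k d : ℕ)
    (hog : ∀ (u : V) (w : G.Walk u u), w.IsCycle → Odd w.length → 2 * d + 1 ≤ w.length)
    (p : ℕ → Polynomial ℝ) (α β γ : ℕ → ℝ)
    (hdeg : ∀ i ≤ d, (p i).natDegree = i)
    (hp0 : p 0 = 1) (hp1 : p 1 = Polynomial.X)
    (horth : ∀ i ≤ d, ∀ j ≤ d, i ≠ j →
      Matrix.trace (Polynomial.aeval (G.adjMatrix ℝ) (p i) *
        Polynomial.aeval (G.adjMatrix ℝ) (p j)) = 0)
    (hnorm : ∀ i ≤ d,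
      (1 / (Fintype.card V : ℝ)) *
          Matrix.trace (Polynomial.aeval (G.adjMatrix ℝ) (p i) *
            Polynomial.aeval (G.adjMatrix ℝ) (p i)) = (p i).eval (k : ℝ) ∧
        (p i).eval (k : ℝ) ≠ 0)
    (hrec0 : 0 < d →
      Polynomial.X * p 0 = Polynomial.C (α 0) * p 0 + Polynomial.C (γ 1) * p 1)
    (hrec : ∀ i, 1 ≤ i → i < d →
      Polynomial.X * p i = Polynomial.C (β (i - 1)) * p (i - 1) +
        Polynomial.C (α i) * p i + Polynomial.C (γ (i + 1)) * p (i + 1)) :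
    (∀ i < d, α i = 0) ∧
      (∀ i ≤ d, (Even i → ∀ j, Odd j → (p i).coeff j = 0) ∧
        (Odd i → ∀ j, Even j → (p i).coeff j = 0)) := by
  let L : ℝ[X] →ₗ[ℝ] ℝ := traceLinearMap V ℝ ℝ ∘ₗ (aeval (G.adjMatrix ℝ)).toLinearMap
  have hL : ∀ f g, L (f * g) = trace (aeval (G.adjMatrix ℝ) f * aeval (G.adjMatrix ℝ) g) :=
    fun f g => by simp [L]
  obtain ⟨hα, hpar⟩ := eq_zero_and_coeffParity_of_odd_vanishing L
    (fun q hq hqd => G.trace_aeval_adjMatrix_eq_zero hq fun u c hc hco => by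
      have := hog u c hc hco
      omega)
    hdeg hp0 hp1 (fun i hi j hj hij => (hL _ _).trans (horth i hi j hj hij))
    (fun i hi h0 => (hnorm i hi).2 (by rw [← (hnorm i hi).1, ← hL, h0, mul_zero]))
    hrec0 hrec
  exact ⟨hα, fun i hi => ⟨fun he j hj => hpar i hi j (he.add_odd hj),
    fun ho j hj => hpar i hi j (ho.add_even hj)⟩⟩

/-- Let `Γ` be a connected `k`-regular graph with `d+1` distinct
eigenvalues whose predistance polynomials `p₀, …, p_d` (the orthogonal system for
`⟨p,q⟩ = (1/n) tr(p(A)q(A))` with `⟨pᵢ,pᵢ⟩ = pᵢ(k) ≠ 0`, `p₀ = 1`, `p₁ = x`)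
satisfy the three-term recurrence `x pᵢ = β_{i-1} p_{i-1} + αᵢ pᵢ + γ_{i+1} p_{i+1}`.
If `Γ` has odd-girth at least `2d+1`, then `αᵢ = 0` for all `i < d`, and each `pᵢ`
(for `i ≤ d`) is even when `i` is even and odd when `i` is odd. -/
theorem stmt_9 {V : Type*} [Fintype V] [DecidableEq V] (G : SimpleGraph V)
    [DecidableRel G.Adj] (k d : ℕ)
    (hconn : G.Connected) (hreg : G.IsRegularOfDegree k)
    (heig : (spectrum ℝ (G.adjMatrix ℝ)).ncard = d + 1)
    (hog : ∀ (u : V) (w : G.Walk u u), w.IsCycle → Odd w.length → 2 * d + 1 ≤ w.length)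
    (p : ℕ → Polynomial ℝ) (α β γ : ℕ → ℝ)
    (hdeg : ∀ i ≤ d, (p i).natDegree = i)
    (hp0 : p 0 = 1) (hp1 : p 1 = Polynomial.X)
    (horth : ∀ i ≤ d, ∀ j ≤ d, i ≠ j →
      Matrix.trace (Polynomial.aeval (G.adjMatrix ℝ) (p i) *
        Polynomial.aeval (G.adjMatrix ℝ) (p j)) = 0)
    (hnorm : ∀ i ≤ d,
      (1 / (Fintype.card V : ℝ)) *
          Matrix.trace (Polynomial.aeval (G.adjMatrix ℝ) (p i) *
            Polynomial.aeval (G.adjMatrix ℝ) (p i)) = (p i).eval (k : ℝ) ∧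
        (p i).eval (k : ℝ) ≠ 0)
    (hrec0 : 0 < d →
      Polynomial.X * p 0 = Polynomial.C (α 0) * p 0 + Polynomial.C (γ 1) * p 1)
    (hrec : ∀ i, 1 ≤ i → i < d →
      Polynomial.X * p i = Polynomial.C (β (i - 1)) * p (i - 1) +
        Polynomial.C (α i) * p i + Polynomial.C (γ (i + 1)) * p (i + 1))
    (hrecd : 0 < d →
      (G.adjMatrix ℝ) * Polynomial.aeval (G.adjMatrix ℝ) (p d)
        = β (d - 1) • Polynomial.aeval (G.adjMatrix ℝ) (p (d - 1)) +
            α d • Polynomial.aeval (G.adjMatrix ℝ) (p d)) :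
    (∀ i < d, α i = 0) ∧
      (∀ i ≤ d, (Even i → ∀ j, Odd j → (p i).coeff j = 0) ∧
        (Odd i → ∀ j, Even j → (p i).coeff j = 0)) :=
  stmt_9_general G k d hog p α β γ hdeg hp0 hp1 horth hnorm hrec0 hrec
end
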